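/- arXiv:1306.1868 — 5 statements merged into one kernel-verified Lean document; each statement's English description precedes it below -/
import Mathlib

section
/- If f̂ ∈ W^m_2 minimizes ψ over W^m_2, then for every k = 0, 1, …, m−1 one has (1/n) Σ_{i=1}^n σ(t_i)^{-2} (f̂(t_i) − y_i) t_i^k = 0. -/
/-!
For `k < m`, the `(m-1)`-th derivative of `ε x^k` is constant, so `f̂ + ε x^k` lies in
`W^m_2` with the same `m`-th derivative as `f̂` and the roughness penalty does not change. Hence
`ε ↦ ψ(f̂ + ε x^k)` is minimal at `ε = 0`, and its derivative there, twice the weighted moment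
`(1/n) Σ σ(tᵢ)⁻² (f̂(tᵢ) - yᵢ) tᵢ^k`, vanishes.
-/

open MeasureTheory Set

noncomputable section

/-- `MemW m f fm` says that `f` belongs to the Sobolev class `W^m_2` on `[0,1]`:
`f` is `(m-1)`-times continuously differentiable on `[0,1]`, its `(m-1)`-th derivative is
absolutely continuous with a.e. derivative `fm` (expressed as the integral representation),
and `fm ∈ L²[0,1]`. -/
def MemW (m : ℕ) (f fm : ℝ → ℝ) : Prop :=
  ContDiffOn ℝ (m - 1 : ℕ) f (Icc 0 1) ∧
  IntegrableOn (fun s => fm s ^ 2) (Icc (0 : ℝ) 1) volume ∧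
  ∀ x ∈ Icc (0 : ℝ) 1,
    iteratedDerivWithin (m - 1) f (Icc (0 : ℝ) 1) x =
      iteratedDerivWithin (m - 1) f (Icc (0 : ℝ) 1) 0 + ∫ s in (0 : ℝ)..x, fm s

/-- The penalized least squares functional `ψ`, evaluated on `f ∈ W^m_2` whose
a.e. `m`-th derivative is `fm`. -/
def psi (n : ℕ) (t y : Fin n → ℝ) (σ ρ : ℝ → ℝ) (lam : ℝ) (f fm : ℝ → ℝ) : ℝ :=
  (1 / n) * ∑ i, (σ (t i) ^ 2)⁻¹ * (y i - f (t i)) ^ 2 +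
    lam * ∫ s in (0 : ℝ)..1, ρ s * fm s ^ 2

theorem MemW.add_of_iteratedDerivWithin_const {m : ℕ} {f fm q : ℝ → ℝ} (hf : MemW m f fm)
    (hq : ContDiffOn ℝ (m - 1 : ℕ) q (Icc 0 1))
    (hq_const : ∀ x ∈ Icc (0 : ℝ) 1, iteratedDerivWithin (m - 1) q (Icc 0 1) x =
      iteratedDerivWithin (m - 1) q (Icc 0 1) 0) :
    MemW m (fun x => f x + q x) fm := by
  obtain ⟨hf_smooth, hfm_sq, hf_ftc⟩ := hf
  have h_add : ∀ z ∈ Icc (0 : ℝ) 1,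
      iteratedDerivWithin (m - 1) (fun x => f x + q x) (Icc 0 1) z =
        iteratedDerivWithin (m - 1) f (Icc 0 1) z + iteratedDerivWithin (m - 1) q (Icc 0 1) z :=
    fun z hz => iteratedDerivWithin_fun_add hz uniqueDiffOn_Icc_zero_one
      (hf_smooth.contDiffWithinAt hz) (hq.contDiffWithinAt hz)
  refine ⟨hf_smooth.add hq, hfm_sq, fun x hx => ?_⟩
  rw [h_add x hx, h_add 0 (left_mem_Icc.2 zero_le_one), hf_ftc x hx, hq_const x hx]
  ring

theorem MemW.add_const_mul_pow {m k : ℕ} {f fm : ℝ → ℝ} (hf : MemW m f fm) (ε : ℝ)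
    (hk : k < m) : MemW m (fun x => f x + ε * x ^ k) fm := by
  refine hf.add_of_iteratedDerivWithin_const
    (contDiff_const.mul (contDiff_id.pow k)).contDiffOn fun x hx => ?_
  have h_pow : ∀ z ∈ Icc (0 : ℝ) 1, iteratedDerivWithin (m - 1) (fun x => ε * x ^ k) (Icc 0 1) z =
      ε * k.descFactorial (m - 1) := by
    intro z hz
    rw [iteratedDerivWithin_const_mul_field, iteratedDerivWithin_pow hz uniqueDiffOn_Icc_zero_one,
      Nat.sub_eq_zero_of_le (by omega : k ≤ m - 1), pow_zero, mul_one]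
  rw [h_pow x hx, h_pow 0 (left_mem_Icc.2 zero_le_one)]

theorem hasDerivAt_psi_add_mul (n : ℕ) (t y : Fin n → ℝ) (σ ρ : ℝ → ℝ) (lam : ℝ)
    (f fm q : ℝ → ℝ) :
    HasDerivAt (fun ε => psi n t y σ ρ lam (fun x => f x + ε * q x) fm)
      (2 * ((1 / n) * ∑ i, (σ (t i) ^ 2)⁻¹ * (f (t i) - y i) * q (t i))) 0 := by
  have h_residual : ∀ i, HasDerivAt
      (fun ε => (σ (t i) ^ 2)⁻¹ * (y i - (f (t i) + ε * q (t i))) ^ 2)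
      (2 * ((σ (t i) ^ 2)⁻¹ * (f (t i) - y i) * q (t i))) 0 := by
    intro i
    refine (((((hasDerivAt_mul_const (q (t i))).const_add (f (t i))).const_sub (y i)).fun_pow 2
      ).const_mul (σ (t i) ^ 2)⁻¹).congr_deriv ?_
    simp only [zero_mul, add_zero]
    push_cast
    ring
  refine (((HasDerivAt.fun_sum (u := Finset.univ) fun i _ => h_residual i).const_mul
    (1 / (n : ℝ))).add_const (lam * ∫ s in (0 : ℝ)..1, ρ s * fm s ^ 2)).congr_deriv ?_
  rw [← Finset.mul_sum]
  ring

theorem minimizer_moment_conditions_general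
    (m n : ℕ)
    (t y : Fin n → ℝ)
    (σ ρ : ℝ → ℝ)
    (lam : ℝ)
    (fhat fhatm : ℝ → ℝ) (hf : MemW m fhat fhatm)
    (hmin : ∀ g gm : ℝ → ℝ, MemW m g gm →
      psi n t y σ ρ lam fhat fhatm ≤ psi n t y σ ρ lam g gm) :
    ∀ k : ℕ, k < m →
      (1 / n) * ∑ i, (σ (t i) ^ 2)⁻¹ * (fhat (t i) - y i) * t i ^ k = 0 := by
  intro k hk
  have h_min : IsLocalMin (fun ε => psi n t y σ ρ lam (fun x => fhat x + ε * x ^ k) fhatm) 0 :=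
    Filter.Eventually.of_forall fun ε => by
      simpa using hmin _ _ (hf.add_const_mul_pow ε hk)
  simpa using h_min.hasDerivAt_eq_zero (hasDerivAt_psi_add_mul n t y σ ρ lam fhat fhatm (· ^ k))

/-- if `f̂` minimizes `ψ` over `W^m_2`, then the weighted residuals are
orthogonal to all polynomials of degree `< m`. -/
theorem minimizer_moment_conditions
    (m n : ℕ) (hm : 1 ≤ m) (hn : 1 ≤ n)
    (t y : Fin n → ℝ) (ht : ∀ i, t i ∈ Icc (0 : ℝ) 1)
    (σ ρ : ℝ → ℝ)
    (hσ : ∀ x ∈ Icc (0 : ℝ) 1, 0 < σ x) (hρ : ∀ x ∈ Icc (0 : ℝ) 1, 0 < ρ x)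
    (lam : ℝ) (hlam : 0 < lam)
    (fhat fhatm : ℝ → ℝ) (hf : MemW m fhat fhatm)
    (hmin : ∀ g gm : ℝ → ℝ, MemW m g gm →
      psi n t y σ ρ lam fhat fhatm ≤ psi n t y σ ρ lam g gm) :
    ∀ k : ℕ, k < m →
      (1 / n) * ∑ i, (σ (t i) ^ 2)⁻¹ * (fhat (t i) - y i) * t i ^ k = 0 :=
  minimizer_moment_conditions_general m n t y σ ρ lam fhat fhatm hf hmin

end
end

section
/- For f:[0,1]→ℝ, the following two families of conditions are equivalent: (i) (1/n) Σ_{i=1}^n σ(t_i)^{-2} (f(t_i) − y_i) t_i^k = 0 for all k = 0, 1, …, m−1; (ii) ľ_k(f, 1) = ľ_k(h, 1) for all k = 1, …, m. -/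
/-!
The iterated integral of the step `𝟙{tᵢ ≤ ·}` from `0` is the truncated power
`𝟙{tᵢ ≤ x} (x - tᵢ)ᵏ / k!`, so `ľ_{k+1}(f, 1) - ľ_{k+1}(h, 1)` is `1 / k!` times the `k`-th moment
of the weights `σ(tᵢ)⁻² (f(tᵢ) - yᵢ) / n` at the reflected points `1 - tᵢ`. Moments of order `< m`
vanish at the points `tᵢ` iff they vanish at `1 - tᵢ`, because `(1 - x)ᵏ` is a polynomial of
degree `k` in `x` and the reflection is an involution.
-/

open MeasureTheory Set

noncomputable section

/-- The iterated empirical integrals: `lcheck n t σ v k` is `ľ_{k+1}(·)` from the paper,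
where `v i` plays the role of the value at the design point `t i` (e.g. `v i = f (t i)`,
or `v i = y i` for `ľ_k(h, ·)`).  Thus
`lcheck n t σ v 0 x = (1/n) ∑ᵢ σ(tᵢ)⁻² vᵢ 𝟙{tᵢ ≤ x}` and
`lcheck n t σ v (k+1) x = ∫₀ˣ lcheck n t σ v k s ds`. -/
def lcheck (n : ℕ) (t : Fin n → ℝ) (σ : ℝ → ℝ) (v : Fin n → ℝ) : ℕ → ℝ → ℝ
  | 0 => fun x => (1 / n) * ∑ i, (σ (t i) ^ 2)⁻¹ * v i * (if t i ≤ x then 1 else 0)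
  | (k + 1) => fun x => ∫ s in (0 : ℝ)..x, lcheck n t σ v k s

open Polynomial

section Moments

variable {ι R : Type*} [CommRing R] (s : Finset ι) (c a : ι → R) {m : ℕ}

theorem sum_mul_eval_eq_zero_of_moments (h : ∀ k < m, ∑ i ∈ s, c i * a i ^ k = 0)
    {p : R[X]} (hp : p.natDegree < m) : ∑ i ∈ s, c i * p.eval (a i) = 0 := by
  simp_rw [eval_eq_sum_range' hp, Finset.mul_sum]
  rw [Finset.sum_comm]
  refine Finset.sum_eq_zero fun k hk => ?_
  simp_rw [mul_left_comm (c _), ← Finset.mul_sum, h k (Finset.mem_range.mp hk), mul_zero]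

theorem moments_one_sub_eq_zero (h : ∀ k < m, ∑ i ∈ s, c i * a i ^ k = 0) :
    ∀ k < m, ∑ i ∈ s, c i * (1 - a i) ^ k = 0 := by
  intro k hk
  have hdeg : ((1 - X : R[X]) ^ k).natDegree < m := by
    have h1 : (1 - X : R[X]).natDegree ≤ 1 :=
      (natDegree_sub_le _ _).trans (by simpa using natDegree_X_le)
    exact (natDegree_pow_le_of_le k h1).trans_lt (by omega)
  simpa using sum_mul_eval_eq_zero_of_moments s c a h hdeg

theorem moments_eq_zero_iff_one_sub :
    (∀ k < m, ∑ i ∈ s, c i * a i ^ k = 0) ↔ ∀ k < m, ∑ i ∈ s, c i * (1 - a i) ^ k = 0 :=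
  ⟨moments_one_sub_eq_zero s c a, fun h => by
    simpa using moments_one_sub_eq_zero s c (fun i => 1 - a i) h⟩

end Moments

theorem monotone_ite_le_sub_pow (a : ℝ) (k : ℕ) :
    Monotone fun s : ℝ => if a ≤ s then (s - a) ^ k else 0 := by
  intro u v huv
  dsimp only
  split_ifs with hu hv hv
  · exact pow_le_pow_left₀ (by linarith) (by linarith) k
  · exact absurd (hu.trans huv) hv
  · exact pow_nonneg (by linarith) k
  · exact le_rfl

theorem integral_ite_le_sub_pow {a : ℝ} (ha : 0 ≤ a) (k : ℕ) (x : ℝ) :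
    ∫ s in (0 : ℝ)..x, (if a ≤ s then (s - a) ^ k else 0) =
      if a ≤ x then (x - a) ^ (k + 1) / (k + 1) else 0 := by
  have hbelow : ∀ b ≤ a, ∫ s in (0 : ℝ)..b, (if a ≤ s then (s - a) ^ k else 0) = 0 := by
    intro b hb
    rw [intervalIntegral.integral_congr_ae (g := fun _ => (0 : ℝ)), intervalIntegral.integral_zero]
    filter_upwards [Measure.ae_ne volume a] with s hsa hs
    have : s < a := lt_of_le_of_ne (by rw [mem_uIoc] at hs; rcases hs with hs | hs <;> linarith) hsa
    simp [not_le.mpr this]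
  rcases lt_or_ge x a with hxa | hax
  · rw [hbelow x hxa.le, if_neg (not_le.mpr hxa)]
  · have hint (b c : ℝ) :=
      (monotone_ite_le_sub_pow a k).intervalIntegrable (μ := volume) (a := b) (b := c)
    rw [← intervalIntegral.integral_add_adjacent_intervals (hint 0 a) (hint a x), hbelow a le_rfl,
      zero_add,
      intervalIntegral.integral_congr (g := fun s => (s - a) ^ k), if_pos hax,
      intervalIntegral.integral_comp_sub_right (fun s => s ^ k), integral_pow]
    · simp
    · intro s hs
      rw [uIcc_of_le hax] at hs
      simp [hs.1]

open Nat in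
theorem lcheck_eq_sum_truncated_pow {n : ℕ} (t : Fin n → ℝ) (σ : ℝ → ℝ) (v : Fin n → ℝ)
    (ht : ∀ i, 0 ≤ t i) (k : ℕ) (x : ℝ) :
    lcheck n t σ v k x =
      1 / n * ∑ i, (σ (t i) ^ 2)⁻¹ * v i / k ! * (if t i ≤ x then (x - t i) ^ k else 0) := by
  induction k generalizing x with
  | zero => simp [lcheck]
  | succ k ih =>
    have hint (i : Fin n) := (monotone_ite_le_sub_pow (t i) k).intervalIntegrable (μ := volume)
      (a := 0) (b := x)
    simp only [lcheck, ih]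
    rw [intervalIntegral.integral_const_mul, intervalIntegral.integral_finsetSum
      fun i _ => (hint i).const_mul _]
    congr 1
    refine Finset.sum_congr rfl fun i _ => ?_
    rw [intervalIntegral.integral_const_mul, integral_ite_le_sub_pow (ht i)]
    split_ifs
    · push_cast [factorial_succ]
      field_simp
    · simp

open Nat in
theorem lcheck_apply_one {n : ℕ} (t : Fin n → ℝ) (σ : ℝ → ℝ) (v : Fin n → ℝ)
    (ht : ∀ i, t i ∈ Icc (0 : ℝ) 1) (k : ℕ) :
    lcheck n t σ v k 1 = (∑ i, 1 / n * (σ (t i) ^ 2)⁻¹ * v i * (1 - t i) ^ k) / k ! := by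
  rw [lcheck_eq_sum_truncated_pow t σ v (fun i => (ht i).1), Finset.mul_sum, Finset.sum_div]
  refine Finset.sum_congr rfl fun i _ => ?_
  rw [if_pos (ht i).2]
  ring

theorem moment_conditions_iff_lcheck_boundary_general
    (m n : ℕ)
    (t y : Fin n → ℝ) (ht : ∀ i, t i ∈ Icc (0 : ℝ) 1)
    (σ : ℝ → ℝ)
    (f : ℝ → ℝ) :
    (∀ k : ℕ, k < m →
        (1 / n) * ∑ i, (σ (t i) ^ 2)⁻¹ * (f (t i) - y i) * t i ^ k = 0) ↔
      (∀ k : ℕ, k < m →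
        lcheck n t σ (fun i => f (t i)) k 1 = lcheck n t σ y k 1) := by
  set w : Fin n → ℝ := fun i => 1 / n * (σ (t i) ^ 2)⁻¹ * (f (t i) - y i)
  have hmoment (k : ℕ) :
      1 / n * ∑ i, (σ (t i) ^ 2)⁻¹ * (f (t i) - y i) * t i ^ k = ∑ i, w i * t i ^ k := by
    simp only [w, Finset.mul_sum, mul_assoc]
  have hboundary (k : ℕ) :
      lcheck n t σ (fun i => f (t i)) k 1 = lcheck n t σ y k 1 ↔ ∑ i, w i * (1 - t i) ^ k = 0 := by
    rw [lcheck_apply_one t σ _ ht, lcheck_apply_one t σ _ ht,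
      div_left_inj' (Nat.cast_ne_zero.2 k.factorial_ne_zero), ← sub_eq_zero,
      ← Finset.sum_sub_distrib]
    simp only [w, ← sub_mul, ← mul_sub]
  simp only [hmoment, hboundary]
  exact moments_eq_zero_iff_one_sub _ w t

/-- equivalence of the moment conditions
`(1/n) ∑ᵢ σ(tᵢ)⁻² (f(tᵢ) - yᵢ) tᵢ^k = 0` for `k = 0, …, m-1` with the boundary conditions
`ľ_k(f, 1) = ľ_k(h, 1)` for `k = 1, …, m` (here `lcheck … k` is `ľ_{k+1}`). -/
theorem moment_conditions_iff_lcheck_boundary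
    (m n : ℕ) (hm : 1 ≤ m) (hn : 1 ≤ n)
    (t y : Fin n → ℝ) (ht : ∀ i, t i ∈ Icc (0 : ℝ) 1)
    (σ : ℝ → ℝ) (hσ : ∀ x ∈ Icc (0 : ℝ) 1, 0 < σ x)
    (f : ℝ → ℝ) :
    (∀ k : ℕ, k < m →
        (1 / n) * ∑ i, (σ (t i) ^ 2)⁻¹ * (f (t i) - y i) * t i ^ k = 0) ↔
      (∀ k : ℕ, k < m →
        lcheck n t σ (fun i => f (t i)) k 1 = lcheck n t σ y k 1) :=
  moment_conditions_iff_lcheck_boundary_general m n t y ht σ f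

end
end

section
/- Suppose f̂ ∈ W^m_2 satisfies (−1)^m λ ρ(t) f̂^{(m)}(t) + ľ_m(f̂, t) = ľ_m(h, t) for almost every t ∈ [0,1]. Let 0 = s₀ < s₁ < ⋯ < s_J < s_{J+1} = 1 be such that {s₁,…,s_J} contains all distinct design points in (0,1). Then for each j = 0, …, J there exists a polynomial p_j of degree at most m−1 such that ρ(t) f̂^{(m)}(t) = p_j(t) for almost every t ∈ (s_j, s_{j+1}). -/
open MeasureTheory Set

noncomputable section

open Polynomial in
/-- A formal antiderivative of a real polynomial. -/
def antider (q : ℝ[X]) : ℝ[X] :=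
  ∑ i ∈ Finset.range (q.natDegree + 1), C (q.coeff i / (i + 1)) * X ^ (i + 1)

open Polynomial in
lemma derivative_antider (q : ℝ[X]) : (antider q).derivative = q := by
  rw [antider, derivative_sum]
  conv_rhs => rw [q.as_sum_range_C_mul_X_pow]
  refine Finset.sum_congr rfl fun i _ => ?_
  rw [derivative_C_mul, derivative_X_pow, Nat.add_sub_cancel, ← mul_assoc, ← C_mul]
  congr 1
  push_cast
  rw [div_mul_cancel₀]
  positivity

open Polynomial in
lemma degree_antider_le (q : ℝ[X]) {k : ℕ} (h : q.degree ≤ (k : ℕ)) :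
    (antider q).degree ≤ ((k + 1 : ℕ) : WithBot ℕ) := by
  refine (degree_sum_le _ _).trans ?_
  apply Finset.sup_le
  intro i hi
  refine (degree_C_mul_X_pow_le _ _).trans ?_
  have hik : i ≤ k := le_trans (Nat.lt_succ_iff.mp (Finset.mem_range.mp hi))
    (natDegree_le_iff_degree_le.mpr h)
  exact_mod_cast Nat.succ_le_succ hik

open Polynomial in
lemma integral_poly (q : ℝ[X]) (a b : ℝ) :
    ∫ x in a..b, q.eval x = (antider q).eval b - (antider q).eval a := by
  refine intervalIntegral.integral_eq_sub_of_hasDerivAt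
    (f := fun x => (antider q).eval x) (fun x _ => ?_) ?_
  · have := (antider q).hasDerivAt x
    rwa [derivative_antider] at this
  · exact (Polynomial.continuous q).intervalIntegrable _ _

lemma mono_ind (c : ℝ) : Monotone fun x : ℝ => if c ≤ x then (1 : ℝ) else 0 := by
  intro x y hxy
  by_cases h : c ≤ x
  · simp [h, le_trans h hxy]
  · by_cases h' : c ≤ y <;> simp [h, h']

lemma lcheck_intble (n : ℕ) (t : Fin n → ℝ) (σ : ℝ → ℝ) (v : Fin n → ℝ) :
    ∀ k a b, IntervalIntegrable (lcheck n t σ v k) volume a b := by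
  intro k
  induction k with
  | zero =>
    intro a b
    simp only [lcheck]
    apply IntervalIntegrable.const_mul
    have : (fun x => ∑ i, (σ (t i) ^ 2)⁻¹ * v i * (if t i ≤ x then (1 : ℝ) else 0))
        = ∑ i : Fin n, fun x => (σ (t i) ^ 2)⁻¹ * v i * (if t i ≤ x then (1 : ℝ) else 0) := by
      funext x; simp
    rw [this]
    exact IntervalIntegrable.sum _ fun i _ => ((mono_ind (t i)).intervalIntegrable).const_mul _
  | succ k ih =>
    intro a b
    simp only [lcheck]
    exact (intervalIntegral.continuous_primitive ih 0).intervalIntegrable a b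

open Polynomial in
lemma lcheck_poly (n : ℕ) (t : Fin n → ℝ) (σ : ℝ → ℝ) (v : Fin n → ℝ)
    (J : ℕ) (s : ℕ → ℝ) (hs0 : s 0 = 0) (hs1 : s (J + 1) = 1)
    (hmono : ∀ j : ℕ, j ≤ J → s j < s (j + 1))
    (hknots : ∀ i : Fin n, t i ∈ Ioo (0 : ℝ) 1 → ∃ j : ℕ, 1 ≤ j ∧ j ≤ J ∧ s j = t i) :
    ∀ k : ℕ, ∀ j : ℕ, j ≤ J → ∃ q : ℝ[X], q.degree ≤ (k : ℕ) ∧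
      ∀ x ∈ Ioo (s j) (s (j + 1)), lcheck n t σ v k x = q.eval x := by
  have hlt : ∀ a b : ℕ, b ≤ J + 1 → a < b → s a < s b := by
    intro a b
    induction b with
    | zero => omega
    | succ b ih =>
      intro hb hab
      rcases Nat.lt_succ_iff_lt_or_eq.mp hab with h | h
      · exact (ih (by omega) h).trans (hmono b (by omega))
      · rw [h]; exact hmono b (by omega)
  have hle : ∀ a b : ℕ, b ≤ J + 1 → a ≤ b → s a ≤ s b := by
    intro a b hb hab
    rcases eq_or_lt_of_le hab with h | h
    · rw [h]
    · exact (hlt a b hb h).le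
  intro k
  induction k with
  | zero =>
    intro j hj
    have hc : (s j + s (j + 1)) / 2 ∈ Ioo (s j) (s (j + 1)) := by
      have := hmono j hj
      constructor <;> [linarith; linarith]
    set c := (s j + s (j + 1)) / 2 with hcdef
    refine ⟨C (lcheck n t σ v 0 c), by simpa using degree_C_le, ?_⟩
    intro x hx
    have tri : ∀ i : Fin n, t i ≤ s j ∨ s (j + 1) ≤ t i := by
      intro i
      by_contra hcon
      push_neg at hcon
      obtain ⟨h1, h2⟩ := hcon
      have hti : t i ∈ Ioo (0 : ℝ) 1 := by
        constructor
        · calc (0 : ℝ) = s 0 := hs0.symm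
            _ ≤ s j := hle 0 j (by omega) (Nat.zero_le _)
            _ < t i := h1
        · calc t i < s (j + 1) := h2
            _ ≤ s (J + 1) := hle (j + 1) (J + 1) le_rfl (by omega)
            _ = 1 := hs1
      obtain ⟨l, hl1, hlJ, hsl⟩ := hknots i hti
      have hjl : j < l := by
        by_contra hcl
        push_neg at hcl
        exact absurd (hle l j (by omega) hcl) (by rw [hsl]; exact not_le.mpr h1)
      have hlj : l < j + 1 := by
        by_contra hcl
        push_neg at hcl
        exact absurd (hle (j + 1) l (by omega) hcl) (by rw [hsl]; exact not_le.mpr h2)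
      omega
    simp only [lcheck, eval_C]
    congr 1
    refine Finset.sum_congr rfl fun i _ => ?_
    rcases tri i with h | h
    · rw [if_pos (h.trans hx.1.le), if_pos (h.trans hc.1.le)]
    · rw [if_neg (not_le.mpr (lt_of_lt_of_le hx.2 h)),
          if_neg (not_le.mpr (lt_of_lt_of_le hc.2 h))]
  | succ k ih =>
    intro j hj
    obtain ⟨q, hqd, hq⟩ := ih j hj
    have hc : (s j + s (j + 1)) / 2 ∈ Ioo (s j) (s (j + 1)) := by
      have := hmono j hj
      constructor <;> [linarith; linarith]
    set c := (s j + s (j + 1)) / 2 with hcdef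
    refine ⟨antider q + C ((∫ u in (0 : ℝ)..c, lcheck n t σ v k u) - (antider q).eval c),
      ?_, ?_⟩
    · refine (degree_add_le _ _).trans (max_le (degree_antider_le q hqd)
        (degree_C_le.trans ?_))
      exact_mod_cast Nat.zero_le (k + 1)
    · intro x hx
      have hsub : uIcc c x ⊆ Ioo (s j) (s (j + 1)) := by
        intro z hz
        rcases Set.mem_uIcc.mp hz with ⟨h1, h2⟩ | ⟨h1, h2⟩ <;>
          exact ⟨by rcases hc with ⟨a1, a2⟩; rcases hx with ⟨b1, b2⟩; linarith,
                 by rcases hc with ⟨a1, a2⟩; rcases hx with ⟨b1, b2⟩; linarith⟩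
      have key : ∫ u in c..x, lcheck n t σ v k u
          = (antider q).eval x - (antider q).eval c := by
        rw [intervalIntegral.integral_congr (g := fun u => q.eval u)
              (fun z hz => hq z (hsub hz)), integral_poly]
      simp only [lcheck, eval_add, eval_C]
      rw [← intervalIntegral.integral_add_adjacent_intervals
            (lcheck_intble n t σ v k 0 c) (lcheck_intble n t σ v k c x), key]
      ring

/-- if `f̂ ∈ W^m_2` satisfies the a.e. Euler equation
`(-1)^m λ ρ f̂^{(m)} + ľ_m(f̂,·) = ľ_m(h,·)`, and `0 = s₀ < s₁ < ⋯ < s_J < s_{J+1} = 1`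
with `{s₁,…,s_J}` containing all the design points lying in `(0,1)`, then on each
open interval `(s_j, s_{j+1})` the function `ρ f̂^{(m)}` agrees a.e. with a polynomial
of degree at most `m-1`.  Here `lcheck … (m-1)` is `ľ_m`. -/
theorem rho_times_deriv_is_piecewise_polynomial
    (m n : ℕ) (hm : 1 ≤ m) (hn : 1 ≤ n)
    (t y : Fin n → ℝ) (ht : ∀ i, t i ∈ Icc (0 : ℝ) 1)
    (σ ρ : ℝ → ℝ)
    (hσ : ∀ x ∈ Icc (0 : ℝ) 1, 0 < σ x) (hρ : ∀ x ∈ Icc (0 : ℝ) 1, 0 < ρ x)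
    (lam : ℝ) (hlam : 0 < lam)
    (fhat fhatm : ℝ → ℝ) (hf : MemW m fhat fhatm)
    (hode : ∀ᵐ x ∂(volume.restrict (Icc (0 : ℝ) 1)),
      (-1 : ℝ) ^ m * lam * ρ x * fhatm x +
          lcheck n t σ (fun i => fhat (t i)) (m - 1) x =
        lcheck n t σ y (m - 1) x)
    (J : ℕ) (s : ℕ → ℝ) (hs0 : s 0 = 0) (hs1 : s (J + 1) = 1)
    (hmono : ∀ j : ℕ, j ≤ J → s j < s (j + 1))
    (hknots : ∀ i : Fin n, t i ∈ Ioo (0 : ℝ) 1 →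
      ∃ j : ℕ, 1 ≤ j ∧ j ≤ J ∧ s j = t i) :
    ∀ j : ℕ, j ≤ J →
      ∃ p : Polynomial ℝ, p.degree ≤ (m - 1 : ℕ) ∧
        ∀ᵐ x ∂(volume.restrict (Ioo (s j) (s (j + 1)))),
          ρ x * fhatm x = p.eval x := by
  intro j hj
  obtain ⟨qf, hqfd, hqf⟩ := lcheck_poly n t σ (fun i => fhat (t i)) J s hs0 hs1 hmono hknots
    (m - 1) j hj
  obtain ⟨qy, hqyd, hqy⟩ := lcheck_poly n t σ y J s hs0 hs1 hmono hknots (m - 1) j hj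
  refine ⟨((-1 : ℝ) ^ m * lam⁻¹) • (qy - qf), ?_, ?_⟩
  · exact (Polynomial.degree_smul_le _ _).trans
      ((Polynomial.degree_sub_le _ _).trans (max_le hqyd hqfd))
  · have hlt : ∀ a b : ℕ, b ≤ J + 1 → a < b → s a < s b := by
      intro a b
      induction b with
      | zero => omega
      | succ b ih =>
        intro hb hab
        rcases Nat.lt_succ_iff_lt_or_eq.mp hab with h | h
        · exact (ih (by omega) h).trans (hmono b (by omega))
        · rw [h]; exact hmono b (by omega)
    have hle : ∀ a b : ℕ, b ≤ J + 1 → a ≤ b → s a ≤ s b := by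
      intro a b hb hab
      rcases eq_or_lt_of_le hab with h | h
      · rw [h]
      · exact (hlt a b hb h).le
    have hsub : Ioo (s j) (s (j + 1)) ⊆ Icc (0 : ℝ) 1 := by
      intro x hx
      constructor
      · have h0 : (0 : ℝ) ≤ s j := hs0 ▸ hle 0 j (by omega) (Nat.zero_le _)
        linarith [hx.1]
      · have h1 : s (j + 1) ≤ 1 := hs1 ▸ hle (j + 1) (J + 1) le_rfl (by omega)
        linarith [hx.2]
    have h1 := ae_restrict_of_ae_restrict_of_subset hsub hode
    have h2 : ∀ᵐ x ∂(volume.restrict (Ioo (s j) (s (j + 1)))),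
        x ∈ Ioo (s j) (s (j + 1)) := ae_restrict_mem measurableSet_Ioo
    filter_upwards [h1, h2] with x hx hxm
    rw [hqf x hxm, hqy x hxm] at hx
    have he : (-1 : ℝ) ^ m * (-1 : ℝ) ^ m = 1 := by rw [← mul_pow]; norm_num
    have hB : qy.eval x - qf.eval x = (-1 : ℝ) ^ m * lam * ρ x * fhatm x := by linarith
    rw [Polynomial.eval_smul, Polynomial.eval_sub, hB, smul_eq_mul]
    have hl : lam⁻¹ * lam = 1 := inv_mul_cancel₀ hlam.ne'
    calc ρ x * fhatm x
        = ((-1 : ℝ) ^ m * (-1 : ℝ) ^ m) * (lam⁻¹ * lam) * (ρ x * fhatm x) := by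
          rw [he, hl]; ring
      _ = (-1 : ℝ) ^ m * lam⁻¹ * ((-1 : ℝ) ^ m * lam * ρ x * fhatm x) := by ring

end
end

section
/- The constraint set 𝒫 is a convex subset of L²[0,1] × ℝ^m: if (u, x₀) ∈ 𝒫, (u', x₀') ∈ 𝒫 and α ∈ [0,1], then (α u + (1−α) u', α x₀ + (1−α) x₀') ∈ 𝒫. -/
open MeasureTheory Set

noncomputable section

/-- One integration from `0`. -/
def Dinv (u : ℝ → ℝ) : ℝ → ℝ := fun x => ∫ s in (0 : ℝ)..x, u s

/-- The `m`-fold iterated integral operator `D^{-m}`. -/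
def DmInv (m : ℕ) (u : ℝ → ℝ) : ℝ → ℝ := Dinv^[m] u

/-- `z_{(u,x₀)}(t) = (D^{-m}u)(t) + θ(t)ᵀ x₀` with
`θ(t) = (1, t, t²/2!, …, t^{m-1}/(m-1)!)ᵀ`. -/
def zfun (m : ℕ) (u : ℝ → ℝ) (x0 : EuclideanSpace ℝ (Fin m)) : ℝ → ℝ :=
  fun t => DmInv m u t + ∑ j : Fin m, x0 j * t ^ (j : ℕ) / ((j : ℕ).factorial : ℝ)

/-- The exceptional set `𝒩 = {t ∈ [0,1] : f₀^{(m)}(t) = 0}`. -/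
def Nset (m : ℕ) (f0 : ℝ → ℝ) : Set ℝ :=
  {s ∈ Icc (0 : ℝ) 1 | iteratedDeriv m f0 s = 0}

/-- Membership in the constraint set `𝒫`:
`u ∈ L²[0,1]`, `‖x₀‖ ≤ μ`, `z_{(u,x₀)}/f₀^{(m)} ≥ ε` on `[0,1] ∖ 𝒩`, and
`(z_{(u,x₀)}/f₀^{(m)})^{-1/(2m)}` Lebesgue integrable on `[0,1] ∖ 𝒩`. -/
def memP (m : ℕ) (f0 : ℝ → ℝ) (μ ε : ℝ)
    (u : ℝ → ℝ) (x0 : EuclideanSpace ℝ (Fin m)) : Prop :=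
  MemLp u 2 (volume.restrict (Icc (0 : ℝ) 1)) ∧
  ‖x0‖ ≤ μ ∧
  (∀ t ∈ Icc (0 : ℝ) 1 \ Nset m f0, ε ≤ zfun m u x0 t / iteratedDeriv m f0 t) ∧
  IntegrableOn
    (fun t => (zfun m u x0 t / iteratedDeriv m f0 t) ^ (-(1 : ℝ) / (2 * m)))
    (Icc (0 : ℝ) 1 \ Nset m f0) volume

/-- The objective functional
`J(u, x₀) = ∫₀¹ r² u² + L₀ ∫_{[0,1]∖𝒩} r^{1-1/(2m)} (z_{(u,x₀)}/f₀^{(m)})^{-1/(2m)}`. -/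
def Jfun (m : ℕ) (r f0 : ℝ → ℝ) (L0 : ℝ)
    (u : ℝ → ℝ) (x0 : EuclideanSpace ℝ (Fin m)) : ℝ :=
  (∫ t in Icc (0 : ℝ) 1, r t ^ 2 * u t ^ 2) +
    L0 * ∫ t in Icc (0 : ℝ) 1 \ Nset m f0,
      r t ^ ((1 : ℝ) - 1 / (2 * m)) *
        (zfun m u x0 t / iteratedDeriv m f0 t) ^ (-(1 : ℝ) / (2 * m))

/-!
The map `(u, x₀) ↦ z_{(u,x₀)}` is linear on `[0,1]`, so the ratio `z / f₀^{(m)}` of a convex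
combination is the same convex combination of the two ratios, and the norm and lower-bound
constraints are membership in the convex sets `closedBall 0 μ` and `Ici ε`. Since `x ↦ x ^ p` is
antitone on `(0, ∞)` for `p ≤ 0`, the power of the combined ratio is dominated by the sum of the
powers of the two ratios, which is integrable.
-/

section IteratedIntegral

variable {b α β : ℝ}

lemma continuousOn_Dinv {g : ℝ → ℝ} (hg : IntegrableOn g (uIcc 0 b)) :
    ContinuousOn (Dinv g) (uIcc 0 b) :=
  intervalIntegral.continuousOn_primitive_interval hg

lemma integrableOn_iterate_Dinv {g : ℝ → ℝ} (hg : IntegrableOn g (uIcc 0 b)) (k : ℕ) :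
    IntegrableOn (Dinv^[k] g) (uIcc 0 b) := by
  induction k with
  | zero => exact hg
  | succ k ih =>
    rw [Function.iterate_succ_apply']
    exact (continuousOn_Dinv ih).integrableOn_compact isCompact_uIcc

lemma eqOn_Dinv_of_eqOn_linear_combination {h g g' : ℝ → ℝ}
    (hg : IntegrableOn g (uIcc 0 b)) (hg' : IntegrableOn g' (uIcc 0 b))
    (hh : EqOn h (fun s => α * g s + β * g' s) (uIcc 0 b)) :
    EqOn (Dinv h) (fun t => α * Dinv g t + β * Dinv g' t) (uIcc 0 b) := by
  intro t ht
  have hsub : uIcc 0 t ⊆ uIcc 0 b := uIcc_subset_uIcc left_mem_uIcc ht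
  simp only [Dinv]
  rw [intervalIntegral.integral_congr (hh.mono hsub),
    intervalIntegral.integral_add ((hg.mono_set hsub).intervalIntegrable.const_mul α)
      ((hg'.mono_set hsub).intervalIntegrable.const_mul β),
    intervalIntegral.integral_const_mul, intervalIntegral.integral_const_mul]

lemma iterate_Dinv_linear_combination_eqOn {g g' : ℝ → ℝ}
    (hg : IntegrableOn g (uIcc 0 b)) (hg' : IntegrableOn g' (uIcc 0 b)) (k : ℕ) :
    EqOn (Dinv^[k] fun s => α * g s + β * g' s)
      (fun t => α * Dinv^[k] g t + β * Dinv^[k] g' t) (uIcc 0 b) := by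
  induction k with
  | zero => exact fun _ _ => rfl
  | succ k ih =>
    simp only [Function.iterate_succ_apply']
    exact eqOn_Dinv_of_eqOn_linear_combination (integrableOn_iterate_Dinv hg k)
      (integrableOn_iterate_Dinv hg' k) ih

variable {m : ℕ} {u u' : ℝ → ℝ} {x0 x0' : EuclideanSpace ℝ (Fin m)}

lemma zfun_linear_combination_eqOn
    (hu : IntegrableOn u (uIcc 0 b)) (hu' : IntegrableOn u' (uIcc 0 b)) :
    EqOn (zfun m (fun s => α * u s + β * u' s) (α • x0 + β • x0'))
      (fun t => α * zfun m u x0 t + β * zfun m u' x0' t) (uIcc 0 b) := by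
  intro t ht
  simp only [zfun, DmInv, iterate_Dinv_linear_combination_eqOn hu hu' m ht, PiLp.add_apply,
    PiLp.smul_apply, smul_eq_mul, mul_add, add_mul, add_div, Finset.sum_add_distrib,
    Finset.mul_sum, mul_assoc, mul_div_assoc]
  ring

lemma zfun_div_linear_combination_eqOn
    (hu : IntegrableOn u (uIcc 0 b)) (hu' : IntegrableOn u' (uIcc 0 b)) (r : ℝ → ℝ) :
    EqOn (fun t => zfun m (fun s => α * u s + β * u' s) (α • x0 + β • x0') t / r t)
      (fun t => α * (zfun m u x0 t / r t) + β * (zfun m u' x0' t / r t)) (uIcc 0 b) :=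
  fun t ht => by simp only [zfun_linear_combination_eqOn hu hu' ht, add_div, mul_div_assoc]

lemma aemeasurable_zfun (hu : IntegrableOn u (uIcc 0 b)) :
    AEMeasurable (zfun m u x0) (volume.restrict (uIcc 0 b)) :=
  (integrableOn_iterate_Dinv hu m).aemeasurable.add (by fun_prop)

end IteratedIntegral

lemma measurableSet_Nset {m : ℕ} {f0 : ℝ → ℝ} (hf0 : Measurable (iteratedDeriv m f0)) :
    MeasurableSet (Nset m f0) :=
  measurableSet_Icc.inter (measurableSet_eq_fun hf0 measurable_const)

lemma rpow_linear_combination_le_add {x y p α β : ℝ} (hx : 0 < x) (hy : 0 < y) (hp : p ≤ 0)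
    (hα : 0 ≤ α) (hβ : 0 ≤ β) (hαβ : α + β = 1) :
    (α * x + β * y) ^ p ≤ x ^ p + y ^ p := by
  have hmin : min x y ≤ α * x + β * y := Convex.min_le_combo x y hα hβ hαβ
  calc (α * x + β * y) ^ p ≤ min x y ^ p :=
        Real.rpow_le_rpow_of_nonpos (lt_min hx hy) hmin hp
    _ ≤ x ^ p + y ^ p := by
        rcases min_choice x y with h | h <;> rw [h]
        · exact le_add_of_nonneg_right (Real.rpow_nonneg hy.le p)
        · exact le_add_of_nonneg_left (Real.rpow_nonneg hx.le p)

lemma integrableOn_rpow_of_eqOn_linear_combination {X : Type*} [MeasurableSpace X]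
    {ν : Measure X} {s : Set X} {G g g' : X → ℝ} {p α β : ℝ} (hs : MeasurableSet s)
    (hG : AEMeasurable G (ν.restrict s)) (hGeq : EqOn G (fun t => α * g t + β * g' t) s)
    (hg : ∀ t ∈ s, 0 < g t) (hg' : ∀ t ∈ s, 0 < g' t) (hp : p ≤ 0)
    (hα : 0 ≤ α) (hβ : 0 ≤ β) (hαβ : α + β = 1)
    (hgp : IntegrableOn (fun t => g t ^ p) s ν) (hg'p : IntegrableOn (fun t => g' t ^ p) s ν) :
    IntegrableOn (fun t => G t ^ p) s ν := by
  refine (hgp.add hg'p).mono' (hG.pow_const p).aestronglyMeasurable ?_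
  filter_upwards [ae_restrict_mem hs] with t ht
  have hcomb : 0 ≤ α * g t + β * g' t :=
    add_nonneg (mul_nonneg hα (hg t ht).le) (mul_nonneg hβ (hg' t ht).le)
  rw [hGeq ht, Real.norm_of_nonneg (Real.rpow_nonneg hcomb p)]
  exact rpow_linear_combination_le_add (hg t ht) (hg' t ht) hp hα hβ hαβ

theorem P_convex_general
    (m : ℕ)
    (f0 : ℝ → ℝ) (hf0 : ContDiff ℝ (2 * m) f0)
    (μ ε : ℝ) (hε : 0 < ε)
    (u u' : ℝ → ℝ) (x0 x0' : EuclideanSpace ℝ (Fin m))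
    (hu : memP m f0 μ ε u x0) (hu' : memP m f0 μ ε u' x0')
    (α : ℝ) (hα : α ∈ Icc (0 : ℝ) 1) :
    memP m f0 μ ε (fun t => α * u t + (1 - α) * u' t) (α • x0 + (1 - α) • x0') := by
  obtain ⟨hL2, hnorm, hge, hint⟩ := hu
  obtain ⟨hL2', hnorm', hge', hint'⟩ := hu'
  have hβ : 0 ≤ 1 - α := sub_nonneg.2 hα.2
  have hαβ : α + (1 - α) = 1 := add_sub_cancel α 1
  have hI : uIcc (0 : ℝ) 1 = Icc 0 1 := uIcc_of_le zero_le_one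
  have hIu : IntegrableOn u (uIcc 0 1) := hI ▸ hL2.integrable one_le_two
  have hIu' : IntegrableOn u' (uIcc 0 1) := hI ▸ hL2'.integrable one_le_two
  have hcont : Continuous (iteratedDeriv m f0) :=
    hf0.continuous_iteratedDeriv m (by exact_mod_cast Nat.le_mul_of_pos_left m two_pos)
  have hS : MeasurableSet (Icc 0 1 \ Nset m f0) :=
    measurableSet_Icc.diff (measurableSet_Nset hcont.measurable)
  have hq := (zfun_div_linear_combination_eqOn (x0 := x0) (x0' := x0') (α := α) (β := 1 - α)
    hIu hIu' (iteratedDeriv m f0)).mono (s₁ := Icc 0 1 \ Nset m f0) fun t ht => hI ▸ ht.1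
  refine ⟨(hL2.const_mul α).add (hL2'.const_mul _), ?_, fun t ht => ?_, ?_⟩
  · simpa using convex_closedBall (0 : EuclideanSpace ℝ (Fin m)) μ
      (by simpa using hnorm) (by simpa using hnorm') hα.1 hβ hαβ
  · exact le_of_le_of_eq (convex_Ici ε (hge t ht) (hge' t ht) hα.1 hβ hαβ) (hq ht).symm
  · refine integrableOn_rpow_of_eqOn_linear_combination hS ?_ hq
      (fun t ht => hε.trans_le (hge t ht)) (fun t ht => hε.trans_le (hge' t ht))
      (div_nonpos_of_nonpos_of_nonneg (by norm_num) (by positivity)) hα.1 hβ hαβ hint hint'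
    have hzmeas := aemeasurable_zfun (x0 := α • x0 + (1 - α) • x0')
      ((hIu.const_mul α).add (hIu'.const_mul (1 - α)))
    exact ((hI ▸ hzmeas).div hcont.measurable.aemeasurable).mono_measure
      (Measure.restrict_mono sdiff_subset le_rfl)

/-- the constraint set `𝒫` is convex. -/
theorem P_convex
    (m : ℕ) (hm : 1 ≤ m)
    (f0 : ℝ → ℝ) (hf0 : ContDiff ℝ (2 * m) f0)
    (μ ε : ℝ) (hμ : 0 < μ) (hε : 0 < ε)
    (u u' : ℝ → ℝ) (x0 x0' : EuclideanSpace ℝ (Fin m))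
    (hu : memP m f0 μ ε u x0) (hu' : memP m f0 μ ε u' x0')
    (α : ℝ) (hα : α ∈ Icc (0 : ℝ) 1) :
    memP m f0 μ ε (fun t => α * u t + (1 - α) * u' t) (α • x0 + (1 - α) • x0') :=
  P_convex_general m f0 hf0 μ ε hε u u' x0 x0' hu hu' α hα

end
end

section
/- The functional J is strictly convex on 𝒫: if (u, x₀) and (u', x₀') belong to 𝒫 and are distinct as elements of L²[0,1] × ℝ^m (i.e. u ≠ u' in L² or x₀ ≠ x₀'), then for every α ∈ (0,1), J(α u + (1−α) u', α x₀ + (1−α) x₀') < α J(u, x₀) + (1−α) J(u', x₀'). -/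
open MeasureTheory Set

noncomputable section

/-!
`J` splits as `Q(u) + L₀ P(u, x₀)` with `Q(u) = ∫ r² u²` and
`P(u, x₀) = ∫_{[0,1]∖𝒩} r^γ (z_{(u,x₀)}/f₀^{(m)})^p`, where `p = -1/(2m) < 0`.
Since `(u, x₀) ↦ z_{(u,x₀)}` is affine and `x ↦ x^p` is strictly convex on `(0, ∞)`, `P` is
convex; and `Q(αu + (1-α)u') = αQ(u) + (1-α)Q(u') - α(1-α)Q(u - u')`.
If `u ≠ u'` in `L²`, the last term gives strictness. Otherwise `x₀ ≠ x₀'` and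
`D^{-m}u = D^{-m}u'`, so the two `z`'s differ by the nonzero polynomial `θᵀ(x₀ - x₀')`, which
has finitely many roots: the pointwise strict convexity inequality then holds almost everywhere
on `[0,1] ∖ 𝒩`, a set of measure one, and integrates to a strict inequality for `P`.
-/

section IteratedIntegral

variable {u v : ℝ → ℝ} {b : ℝ}

lemma DmInv_succ (k : ℕ) (u : ℝ → ℝ) : DmInv (k + 1) u = Dinv (DmInv k u) :=
  Function.iterate_succ_apply' Dinv k u

lemma integrableOn_DmInv (hu : IntegrableOn u (uIcc 0 b)) (k : ℕ) :
    IntegrableOn (DmInv k u) (uIcc 0 b) := by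
  induction k with
  | zero => exact hu
  | succ k ih =>
    rw [DmInv_succ]
    exact (intervalIntegral.continuousOn_primitive_interval ih).integrableOn_compact isCompact_uIcc

lemma DmInv_linear_combination (hu : IntegrableOn u (uIcc 0 b))
    (hv : IntegrableOn v (uIcc 0 b)) (a c : ℝ) (k : ℕ) {t : ℝ} (ht : t ∈ uIcc 0 b) :
    DmInv k (fun s => a * u s + c * v s) t = a * DmInv k u t + c * DmInv k v t := by
  induction k generalizing t with
  | zero => rfl
  | succ k ih =>
    have hsub := uIcc_subset_uIcc_left ht
    simp only [DmInv_succ, Dinv]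
    rw [intervalIntegral.integral_congr fun s hs => ih (hsub hs), intervalIntegral.integral_add,
      intervalIntegral.integral_const_mul, intervalIntegral.integral_const_mul]
    exacts [((integrableOn_DmInv hu k).mono_set hsub).intervalIntegrable.const_mul a,
      ((integrableOn_DmInv hv k).mono_set hsub).intervalIntegrable.const_mul c]

lemma eqOn_Dinv_of_ae_eq (h : u =ᵐ[volume.restrict (uIcc 0 b)] v) :
    EqOn (Dinv u) (Dinv v) (uIcc 0 b) := fun _ ht =>
  intervalIntegral.integral_congr_ae_restrict <|
    ae_restrict_of_ae_restrict_of_subset (uIoc_subset_uIcc.trans (uIcc_subset_uIcc_left ht)) h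

lemma eqOn_DmInv (h : EqOn u v (uIcc 0 b)) (k : ℕ) :
    EqOn (DmInv k u) (DmInv k v) (uIcc 0 b) := by
  induction k with
  | zero => exact h
  | succ k ih =>
    intro t ht
    simp only [DmInv_succ, Dinv]
    exact intervalIntegral.integral_congr (ih.mono (uIcc_subset_uIcc_left ht))

lemma eqOn_DmInv_succ_of_ae_eq (h : u =ᵐ[volume.restrict (uIcc 0 b)] v) (k : ℕ) :
    EqOn (DmInv (k + 1) u) (DmInv (k + 1) v) (uIcc 0 b) :=
  eqOn_DmInv (eqOn_Dinv_of_ae_eq h) k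

end IteratedIntegral

section Zfun

variable {m : ℕ} {u v : ℝ → ℝ} {b t : ℝ}

lemma zfun_linear_combination (hu : IntegrableOn u (uIcc 0 b)) (hv : IntegrableOn v (uIcc 0 b))
    (x y : EuclideanSpace ℝ (Fin m)) (a c : ℝ) (ht : t ∈ uIcc 0 b) :
    zfun m (fun s => a * u s + c * v s) (a • x + c • y) t =
      a * zfun m u x t + c * zfun m v y t := by
  simp only [zfun, DmInv_linear_combination hu hv a c m ht, PiLp.add_apply, PiLp.smul_apply,
    smul_eq_mul, add_mul, add_div, Finset.sum_add_distrib, mul_assoc, mul_div_assoc,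
    ← Finset.mul_sum]
  ring

lemma zfun_sub_of_ae_eq (hm : 1 ≤ m) (h : u =ᵐ[volume.restrict (uIcc 0 b)] v)
    (x y : EuclideanSpace ℝ (Fin m)) (ht : t ∈ uIcc 0 b) :
    zfun m u x t - zfun m v y t =
      ∑ j : Fin m, (x - y) j * t ^ (j : ℕ) / (j : ℕ).factorial := by
  obtain ⟨k, rfl⟩ := Nat.exists_eq_add_of_le' hm
  simp only [zfun, eqOn_DmInv_succ_of_ae_eq h k ht, add_sub_add_left_eq_sub,
    ← Finset.sum_sub_distrib, PiLp.sub_apply, sub_mul, sub_div]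

lemma finite_setOf_sum_mul_pow_div_factorial_eq_zero {x : EuclideanSpace ℝ (Fin m)}
    (hx : x ≠ 0) :
    {t : ℝ | ∑ j : Fin m, x j * t ^ (j : ℕ) / (j : ℕ).factorial = 0}.Finite := by
  obtain ⟨i, hi⟩ : ∃ i, x i ≠ 0 := by
    by_contra! h
    exact hx (by ext j; simp [h])
  set q : Polynomial ℝ :=
    ∑ j : Fin m, Polynomial.C (x j / (j : ℕ).factorial) * Polynomial.X ^ (j : ℕ)
  have hq : q ≠ 0 := by
    intro h0
    have := congrArg (Polynomial.coeff · i) h0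
    exact hi (by simpa [q, Polynomial.finsetSum_coeff, Fin.val_inj, Nat.factorial_ne_zero]
      using this)
  refine (q.finite_setOfPred_isRoot hq).subset fun t ht => ?_
  simp only [q, mem_ofPred_eq, Polynomial.IsRoot, Polynomial.eval_finsetSum, Polynomial.eval_mul,
    Polynomial.eval_C, Polynomial.eval_pow, Polynomial.eval_X]
  rw [← ht]
  exact Finset.sum_congr rfl fun j _ => div_mul_eq_mul_div _ _ _

end Zfun

lemma strictConvexOn_rpow_of_neg {p : ℝ} (hp : p < 0) :
    StrictConvexOn ℝ (Ioi 0) fun x : ℝ => x ^ p := by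
  refine strictConvexOn_of_deriv2_pos' (convex_Ioi 0)
    (fun x hx => (Real.continuousAt_rpow_const x p (Or.inl hx.ne')).continuousWithinAt)
    fun x hx => ?_
  rw [Real.iter_deriv_rpow_const]
  have hpoch : (descPochhammer ℝ 2).eval p = p * (p - 1) := by
    simp [descPochhammer_succ_right]
  rw [hpoch]
  exact mul_pos (mul_pos_of_neg_of_neg hp (by linarith)) (Real.rpow_pos_of_pos hx _)

section ConvexIntegral

variable {α : Type*} [MeasurableSpace α] {μ : Measure α} {s : Set ℝ} {φ : ℝ → ℝ}
  {a : ℝ}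

lemma ConvexOn.mul_comp_convex_combination_le (hφ : ConvexOn ℝ s φ) {w x y : ℝ} (hw : 0 ≤ w)
    (hx : x ∈ s) (hy : y ∈ s) (ha₀ : 0 ≤ a) (ha₁ : a ≤ 1) :
    w * φ (a * x + (1 - a) * y) ≤ a * (w * φ x) + (1 - a) * (w * φ y) := by
  have := mul_le_mul_of_nonneg_left (hφ.2 hx hy ha₀ (sub_nonneg.2 ha₁) (add_sub_cancel a 1)) hw
  simp only [smul_eq_mul] at this
  linarith

lemma StrictConvexOn.mul_comp_convex_combination_lt (hφ : StrictConvexOn ℝ s φ) {w x y : ℝ}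
    (hw : 0 < w) (hx : x ∈ s) (hy : y ∈ s) (hxy : x ≠ y) (ha₀ : 0 < a) (ha₁ : a < 1) :
    w * φ (a * x + (1 - a) * y) < a * (w * φ x) + (1 - a) * (w * φ y) := by
  have := mul_lt_mul_of_pos_left (hφ.2 hx hy hxy ha₀ (sub_pos.2 ha₁) (add_sub_cancel a 1)) hw
  simp only [smul_eq_mul] at this
  linarith

lemma integral_convex_combination {f g : α → ℝ} (hf : Integrable f μ) (hg : Integrable g μ) :
    ∫ t, a * f t + (1 - a) * g t ∂μ = a * ∫ t, f t ∂μ + (1 - a) * ∫ t, g t ∂μ := by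
  rw [integral_add (hf.const_mul a) (hg.const_mul _), integral_const_mul, integral_const_mul]

variable {w F G : α → ℝ}

theorem ConvexOn.integral_mul_comp_convex_combination_le (hφ : ConvexOn ℝ s φ)
    (ha₀ : 0 ≤ a) (ha₁ : a ≤ 1) (hw : ∀ᵐ t ∂μ, 0 ≤ w t)
    (hF : ∀ᵐ t ∂μ, F t ∈ s) (hG : ∀ᵐ t ∂μ, G t ∈ s)
    (hFi : Integrable (fun t => w t * φ (F t)) μ) (hGi : Integrable (fun t => w t * φ (G t)) μ)
    (hi : Integrable (fun t => w t * φ (a * F t + (1 - a) * G t)) μ) :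
    ∫ t, w t * φ (a * F t + (1 - a) * G t) ∂μ ≤
      a * ∫ t, w t * φ (F t) ∂μ + (1 - a) * ∫ t, w t * φ (G t) ∂μ := by
  rw [← integral_convex_combination hFi hGi]
  refine integral_mono_ae hi ((hFi.const_mul a).add (hGi.const_mul _)) ?_
  filter_upwards [hw, hF, hG] with t hwt hFt hGt
  exact hφ.mul_comp_convex_combination_le hwt hFt hGt ha₀ ha₁

theorem StrictConvexOn.integral_mul_comp_convex_combination_lt (hφ : StrictConvexOn ℝ s φ)
    (ha₀ : 0 < a) (ha₁ : a < 1) (hw : ∀ᵐ t ∂μ, 0 < w t)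
    (hF : ∀ᵐ t ∂μ, F t ∈ s) (hG : ∀ᵐ t ∂μ, G t ∈ s) (hFG : ¬ F =ᵐ[μ] G)
    (hFi : Integrable (fun t => w t * φ (F t)) μ) (hGi : Integrable (fun t => w t * φ (G t)) μ)
    (hi : Integrable (fun t => w t * φ (a * F t + (1 - a) * G t)) μ) :
    ∫ t, w t * φ (a * F t + (1 - a) * G t) ∂μ <
      a * ∫ t, w t * φ (F t) ∂μ + (1 - a) * ∫ t, w t * φ (G t) ∂μ := by
  have hle : (fun t => w t * φ (a * F t + (1 - a) * G t)) ≤ᵐ[μ]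
      fun t => a * (w t * φ (F t)) + (1 - a) * (w t * φ (G t)) := by
    filter_upwards [hw, hF, hG] with t hwt hFt hGt
    exact hφ.convexOn.mul_comp_convex_combination_le hwt.le hFt hGt ha₀.le ha₁.le
  have hci := (hFi.const_mul a).add (hGi.const_mul (1 - a))
  rw [← integral_convex_combination hFi hGi]
  refine (integral_mono_ae hi hci hle).lt_of_ne fun heq => hFG ?_
  filter_upwards [(integral_eq_iff_of_ae_le hi hci hle).1 heq, hw, hF, hG]
    with t ht hwt hFt hGt
  by_contra hne
  exact (hφ.mul_comp_convex_combination_lt hwt hFt hGt hne ha₀ ha₁).ne ht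

end ConvexIntegral

section WeightedSquare

variable {α : Type*} [MeasurableSpace α] {μ : Measure α} {w u v : α → ℝ}

lemma integral_mul_sq_convex_combination (hu : Integrable (fun t => w t * u t ^ 2) μ)
    (hv : Integrable (fun t => w t * v t ^ 2) μ)
    (huv : Integrable (fun t => w t * (u t - v t) ^ 2) μ) (a : ℝ) :
    ∫ t, w t * (a * u t + (1 - a) * v t) ^ 2 ∂μ =
      a * ∫ t, w t * u t ^ 2 ∂μ + (1 - a) * ∫ t, w t * v t ^ 2 ∂μ -
        a * (1 - a) * ∫ t, w t * (u t - v t) ^ 2 ∂μ := by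
  have hc : Integrable (fun t => a * (w t * u t ^ 2) + (1 - a) * (w t * v t ^ 2)) μ :=
    (hu.const_mul a).add (hv.const_mul _)
  rw [← integral_convex_combination hu hv, ← integral_const_mul,
    ← integral_sub hc (huv.const_mul _)]
  congr 1 with t
  ring

lemma integral_mul_sq_sub_pos (hw : ∀ᵐ t ∂μ, 0 < w t) (huv : ¬ u =ᵐ[μ] v)
    (hi : Integrable (fun t => w t * (u t - v t) ^ 2) μ) :
    0 < ∫ t, w t * (u t - v t) ^ 2 ∂μ := by
  have hnonneg : 0 ≤ᵐ[μ] fun t => w t * (u t - v t) ^ 2 := by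
    filter_upwards [hw] with t hwt using by positivity
  refine (integral_nonneg_of_ae hnonneg).lt_of_ne fun h0 => huv ?_
  filter_upwards [(integral_eq_zero_iff_of_nonneg_ae hnonneg hi).1 h0.symm, hw] with t ht hwt
  simpa [hwt.ne', sub_eq_zero] using ht

end WeightedSquare

def controlCost (r u : ℝ → ℝ) : ℝ := ∫ t in Icc (0 : ℝ) 1, r t ^ 2 * u t ^ 2

def zRatio (m : ℕ) (f0 u : ℝ → ℝ) (x0 : EuclideanSpace ℝ (Fin m)) (t : ℝ) : ℝ :=
  zfun m u x0 t / iteratedDeriv m f0 t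

def penalty (m : ℕ) (r f0 u : ℝ → ℝ) (x0 : EuclideanSpace ℝ (Fin m)) : ℝ :=
  ∫ t in Icc (0 : ℝ) 1 \ Nset m f0,
    r t ^ ((1 : ℝ) - 1 / (2 * m)) * zRatio m f0 u x0 t ^ (-(1 : ℝ) / (2 * m))

lemma Jfun_eq (m : ℕ) (r f0 : ℝ → ℝ) (L0 : ℝ) (u : ℝ → ℝ)
    (x0 : EuclideanSpace ℝ (Fin m)) :
    Jfun m r f0 L0 u x0 = controlCost r u + L0 * penalty m r f0 u x0 := rfl

section ControlCost

variable {r u v : ℝ → ℝ}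

lemma integrableOn_mul_sq (hrc : ContinuousOn r (Icc 0 1))
    (hu : MemLp u 2 (volume.restrict (Icc (0 : ℝ) 1))) :
    IntegrableOn (fun t => r t ^ 2 * u t ^ 2) (Icc 0 1) :=
  IntegrableOn.continuousOn_mul (hrc.pow 2) hu.integrable_sq isCompact_Icc

lemma controlCost_convex_combination (hrc : ContinuousOn r (Icc 0 1))
    (hu : MemLp u 2 (volume.restrict (Icc (0 : ℝ) 1)))
    (hv : MemLp v 2 (volume.restrict (Icc (0 : ℝ) 1))) (a : ℝ) :
    controlCost r (fun t => a * u t + (1 - a) * v t) =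
      a * controlCost r u + (1 - a) * controlCost r v -
        a * (1 - a) * controlCost r (fun t => u t - v t) :=
  integral_mul_sq_convex_combination (integrableOn_mul_sq hrc hu) (integrableOn_mul_sq hrc hv)
    (integrableOn_mul_sq hrc (hu.sub hv)) a

lemma controlCost_sub_pos (hrc : ContinuousOn r (Icc 0 1))
    (hrpos : ∀ t ∈ Icc (0 : ℝ) 1, 0 < r t)
    (hu : MemLp u 2 (volume.restrict (Icc (0 : ℝ) 1)))
    (hv : MemLp v 2 (volume.restrict (Icc (0 : ℝ) 1)))
    (huv : ¬ u =ᵐ[volume.restrict (Icc (0 : ℝ) 1)] v) :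
    0 < controlCost r (fun t => u t - v t) :=
  integral_mul_sq_sub_pos
    ((ae_restrict_mem measurableSet_Icc).mono fun t ht => pow_pos (hrpos t ht) 2) huv
    (integrableOn_mul_sq hrc (hu.sub hv))

lemma controlCost_sub_eq_zero (huv : u =ᵐ[volume.restrict (Icc (0 : ℝ) 1)] v) :
    controlCost r (fun t => u t - v t) = 0 := by
  refine (integral_congr_ae ?_).trans (integral_zero ℝ ℝ)
  filter_upwards [huv] with t ht
  simp [ht]

end ControlCost

section Penalty

variable {m : ℕ} {r f0 u v : ℝ → ℝ} {μ ε a : ℝ} {x y : EuclideanSpace ℝ (Fin m)}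

lemma integrableOn_of_memP (hu : memP m f0 μ ε u x) : IntegrableOn u (Icc 0 1) :=
  hu.1.integrable one_le_two

lemma measurable_iteratedDeriv (hm : 1 ≤ m) (f : ℝ → ℝ) :
    Measurable (iteratedDeriv m f) := by
  obtain ⟨k, rfl⟩ := Nat.exists_eq_add_of_le' hm
  rw [iteratedDeriv_succ]
  exact measurable_deriv _

lemma measurableSet_Icc_diff_Nset (hm : 1 ≤ m) (f0 : ℝ → ℝ) :
    MeasurableSet (Icc (0 : ℝ) 1 \ Nset m f0) :=
  measurableSet_Icc.diff
    (measurableSet_Icc.inter (measurable_iteratedDeriv hm f0 (measurableSet_singleton 0)))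

lemma aestronglyMeasurable_zRatio (hm : 1 ≤ m) (hu : IntegrableOn u (Icc 0 1))
    (x : EuclideanSpace ℝ (Fin m)) :
    AEStronglyMeasurable (zRatio m f0 u x) (volume.restrict (Icc 0 1)) := by
  rw [← uIcc_of_le zero_le_one] at hu ⊢
  refine (AEMeasurable.div ?_ (measurable_iteratedDeriv hm f0).aemeasurable).aestronglyMeasurable
  exact (integrableOn_DmInv hu m).aemeasurable.add (Continuous.aemeasurable (by fun_prop))

lemma zRatio_convex_combination (hu : IntegrableOn u (Icc 0 1)) (hv : IntegrableOn v (Icc 0 1))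
    {t : ℝ} (ht : t ∈ Icc (0 : ℝ) 1) :
    zRatio m f0 (fun s => a * u s + (1 - a) * v s) (a • x + (1 - a) • y) t =
      a * zRatio m f0 u x t + (1 - a) * zRatio m f0 v y t := by
  rw [← uIcc_of_le zero_le_one] at hu hv ht
  rw [zRatio, zfun_linear_combination hu hv x y a (1 - a) ht, add_div, mul_div_assoc,
    mul_div_assoc, zRatio, zRatio]

lemma integrableOn_penaltyIntegrand (hm : 1 ≤ m) (hrc : ContinuousOn r (Icc 0 1))
    (hrpos : ∀ t ∈ Icc (0 : ℝ) 1, 0 < r t) (hε : 0 < ε) {g : ℝ → ℝ}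
    (hg : AEStronglyMeasurable g (volume.restrict (Icc 0 1)))
    (hgε : ∀ t ∈ Icc (0 : ℝ) 1 \ Nset m f0, ε ≤ g t) :
    IntegrableOn (fun t => r t ^ ((1 : ℝ) - 1 / (2 * m)) * g t ^ (-(1 : ℝ) / (2 * m)))
      (Icc 0 1 \ Nset m f0) := by
  have hE := measurableSet_Icc_diff_Nset hm f0
  refine IntegrableOn.continuousOn_mul_of_subset
    (hrc.rpow_const fun t ht => Or.inl (hrpos t ht).ne') ?_ isCompact_Icc hE sdiff_subset
  refine IntegrableOn.of_bound ((measure_mono sdiff_subset).trans_lt measure_Icc_lt_top) ?_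
    (ε ^ (-(1 : ℝ) / (2 * m))) ?_
  · exact ((hg.mono_measure (Measure.restrict_mono sdiff_subset le_rfl)).aemeasurable.pow_const
      _).aestronglyMeasurable
  filter_upwards [ae_restrict_mem hE] with t ht
  rw [Real.norm_of_nonneg (Real.rpow_nonneg (hε.le.trans (hgε t ht)) _)]
  exact Real.rpow_le_rpow_of_nonpos hε (hgε t ht)
    (div_nonpos_of_nonpos_of_nonneg (by norm_num) (by positivity))

lemma penalty_convex_combination_eq (hm : 1 ≤ m) (hu : IntegrableOn u (Icc 0 1))
    (hv : IntegrableOn v (Icc 0 1)) :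
    penalty m r f0 (fun t => a * u t + (1 - a) * v t) (a • x + (1 - a) • y) =
      ∫ t in Icc (0 : ℝ) 1 \ Nset m f0, r t ^ ((1 : ℝ) - 1 / (2 * m)) *
        (a * zRatio m f0 u x t + (1 - a) * zRatio m f0 v y t) ^ (-(1 : ℝ) / (2 * m)) :=
  setIntegral_congr_fun (measurableSet_Icc_diff_Nset hm f0) fun t ht => by
    rw [zRatio_convex_combination hu hv ht.1]

lemma ae_restrict_rpow_pos (hrpos : ∀ t ∈ Icc (0 : ℝ) 1, 0 < r t) (hm : 1 ≤ m) (γ : ℝ) :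
    ∀ᵐ t ∂volume.restrict (Icc (0 : ℝ) 1 \ Nset m f0), 0 < r t ^ γ :=
  (ae_restrict_mem (measurableSet_Icc_diff_Nset hm f0)).mono fun t ht =>
    Real.rpow_pos_of_pos (hrpos t ht.1) γ

lemma ae_zRatio_pos (hm : 1 ≤ m) (hε : 0 < ε) (hu : memP m f0 μ ε u x) :
    ∀ᵐ t ∂volume.restrict (Icc (0 : ℝ) 1 \ Nset m f0), zRatio m f0 u x t ∈ Ioi 0 :=
  (ae_restrict_mem (measurableSet_Icc_diff_Nset hm f0)).mono fun t ht =>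
    hε.trans_le (hu.2.2.1 t ht)

lemma integrableOn_penaltyIntegrand_of_memP (hm : 1 ≤ m) (hrc : ContinuousOn r (Icc 0 1))
    (hrpos : ∀ t ∈ Icc (0 : ℝ) 1, 0 < r t) (hε : 0 < ε) (hu : memP m f0 μ ε u x) :
    IntegrableOn
      (fun t => r t ^ ((1 : ℝ) - 1 / (2 * m)) * zRatio m f0 u x t ^ (-(1 : ℝ) / (2 * m)))
      (Icc 0 1 \ Nset m f0) :=
  integrableOn_penaltyIntegrand hm hrc hrpos hε
    (aestronglyMeasurable_zRatio hm (integrableOn_of_memP hu) x) hu.2.2.1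

lemma integrableOn_penaltyIntegrand_convex_combination (hm : 1 ≤ m)
    (hrc : ContinuousOn r (Icc 0 1)) (hrpos : ∀ t ∈ Icc (0 : ℝ) 1, 0 < r t) (hε : 0 < ε)
    (hu : memP m f0 μ ε u x) (hv : memP m f0 μ ε v y) (ha₀ : 0 ≤ a) (ha₁ : a ≤ 1) :
    IntegrableOn (fun t => r t ^ ((1 : ℝ) - 1 / (2 * m)) *
        (a * zRatio m f0 u x t + (1 - a) * zRatio m f0 v y t) ^ (-(1 : ℝ) / (2 * m)))
      (Icc 0 1 \ Nset m f0) := by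
  refine integrableOn_penaltyIntegrand hm hrc hrpos hε
    (((aestronglyMeasurable_zRatio hm (integrableOn_of_memP hu) x).const_mul a).add
      ((aestronglyMeasurable_zRatio hm (integrableOn_of_memP hv) y).const_mul _))
    fun t ht => ?_
  have hut : ε ≤ zRatio m f0 u x t := hu.2.2.1 t ht
  have hvt : ε ≤ zRatio m f0 v y t := hv.2.2.1 t ht
  nlinarith

lemma neg_one_div_two_mul_neg (hm : 1 ≤ m) : -(1 : ℝ) / (2 * m) < 0 := by
  have : (1 : ℝ) ≤ m := by exact_mod_cast hm
  exact div_neg_of_neg_of_pos (by norm_num) (by linarith)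

lemma penalty_convex_combination_le (hm : 1 ≤ m) (hrc : ContinuousOn r (Icc 0 1))
    (hrpos : ∀ t ∈ Icc (0 : ℝ) 1, 0 < r t) (hε : 0 < ε)
    (hu : memP m f0 μ ε u x) (hv : memP m f0 μ ε v y) (ha₀ : 0 ≤ a) (ha₁ : a ≤ 1) :
    penalty m r f0 (fun t => a * u t + (1 - a) * v t) (a • x + (1 - a) • y) ≤
      a * penalty m r f0 u x + (1 - a) * penalty m r f0 v y := by
  rw [penalty_convex_combination_eq hm (integrableOn_of_memP hu) (integrableOn_of_memP hv)]
  exact (strictConvexOn_rpow_of_neg (neg_one_div_two_mul_neg hm)).convexOn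
    |>.integral_mul_comp_convex_combination_le ha₀ ha₁
      ((ae_restrict_rpow_pos hrpos hm _).mono fun _ h => h.le)
    (ae_zRatio_pos hm hε hu) (ae_zRatio_pos hm hε hv)
    (integrableOn_penaltyIntegrand_of_memP hm hrc hrpos hε hu)
    (integrableOn_penaltyIntegrand_of_memP hm hrc hrpos hε hv)
    (integrableOn_penaltyIntegrand_convex_combination hm hrc hrpos hε hu hv ha₀ ha₁)

lemma zRatio_not_ae_eq (hm : 1 ≤ m) (hN : volume (Nset m f0) = 0)
    (huv : u =ᵐ[volume.restrict (Icc (0 : ℝ) 1)] v) (hxy : x ≠ y) :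
    ¬ zRatio m f0 u x =ᵐ[volume.restrict (Icc 0 1 \ Nset m f0)] zRatio m f0 v y := by
  intro h
  rw [← uIcc_of_le zero_le_one] at huv
  have hroots : (Icc (0 : ℝ) 1 \ Nset m f0 : Set ℝ) ≤ᵐ[volume]
      {t : ℝ | ∑ j : Fin m, (x - y) j * t ^ (j : ℕ) / (j : ℕ).factorial = 0} := by
    filter_upwards [(ae_restrict_iff' (measurableSet_Icc_diff_Nset hm f0)).1 h] with t ht htE
    have hφ : iteratedDeriv m f0 t ≠ 0 := fun h0 => htE.2 ⟨htE.1, h0⟩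
    have hzt : zfun m u x t = zfun m v y t := (div_left_inj' hφ).1 (ht htE)
    rw [← uIcc_of_le zero_le_one] at htE
    show _ = 0
    rw [← zfun_sub_of_ae_eq hm huv x y htE.1, hzt, sub_self]
  have hvol : volume (Icc (0 : ℝ) 1 \ Nset m f0) = 1 := by
    rw [measure_sdiff_null hN, Real.volume_Icc, sub_zero, ENNReal.ofReal_one]
  have := (measure_mono_ae hroots).trans_eq
    ((finite_setOf_sum_mul_pow_div_factorial_eq_zero (sub_ne_zero.2 hxy)).measure_zero _)
  rw [hvol] at this
  exact one_ne_zero (nonpos_iff_eq_zero.1 this)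

lemma penalty_convex_combination_lt (hm : 1 ≤ m) (hrc : ContinuousOn r (Icc 0 1))
    (hrpos : ∀ t ∈ Icc (0 : ℝ) 1, 0 < r t) (hN : volume (Nset m f0) = 0) (hε : 0 < ε)
    (hu : memP m f0 μ ε u x) (hv : memP m f0 μ ε v y)
    (huv : u =ᵐ[volume.restrict (Icc (0 : ℝ) 1)] v) (hxy : x ≠ y)
    (ha₀ : 0 < a) (ha₁ : a < 1) :
    penalty m r f0 (fun t => a * u t + (1 - a) * v t) (a • x + (1 - a) • y) <
      a * penalty m r f0 u x + (1 - a) * penalty m r f0 v y := by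
  rw [penalty_convex_combination_eq hm (integrableOn_of_memP hu) (integrableOn_of_memP hv)]
  exact (strictConvexOn_rpow_of_neg (neg_one_div_two_mul_neg hm))
    |>.integral_mul_comp_convex_combination_lt ha₀ ha₁ (ae_restrict_rpow_pos hrpos hm _)
    (ae_zRatio_pos hm hε hu) (ae_zRatio_pos hm hε hv) (zRatio_not_ae_eq hm hN huv hxy)
    (integrableOn_penaltyIntegrand_of_memP hm hrc hrpos hε hu)
    (integrableOn_penaltyIntegrand_of_memP hm hrc hrpos hε hv)
    (integrableOn_penaltyIntegrand_convex_combination hm hrc hrpos hε hu hv ha₀.le ha₁.le)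

end Penalty

theorem J_strictly_convex_general
    (m : ℕ) (hm : 1 ≤ m)
    (r : ℝ → ℝ) (hrc : ContinuousOn r (Icc 0 1))
    (hrpos : ∀ t ∈ Icc (0 : ℝ) 1, 0 < r t)
    (L0 : ℝ) (hL0 : 0 < L0)
    (f0 : ℝ → ℝ)
    (hN : volume (Nset m f0) = 0)
    (μ ε : ℝ) (hε : 0 < ε)
    (u u' : ℝ → ℝ) (x0 x0' : EuclideanSpace ℝ (Fin m))
    (hu : memP m f0 μ ε u x0) (hu' : memP m f0 μ ε u' x0')
    (hdist : ¬(u =ᵐ[volume.restrict (Icc (0 : ℝ) 1)] u' ∧ x0 = x0'))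
    (α : ℝ) (hα : α ∈ Ioo (0 : ℝ) 1) :
    Jfun m r f0 L0 (fun t => α * u t + (1 - α) * u' t) (α • x0 + (1 - α) • x0') <
      α * Jfun m r f0 L0 u x0 + (1 - α) * Jfun m r f0 L0 u' x0' := by
  obtain ⟨hα₀, hα₁⟩ := hα
  simp only [Jfun_eq, controlCost_convex_combination hrc hu.1 hu'.1]
  by_cases huu' : u =ᵐ[volume.restrict (Icc (0 : ℝ) 1)] u'
  · have hP := penalty_convex_combination_lt hm hrc hrpos hN hε hu hu' huu'
      (fun h => hdist ⟨huu', h⟩) hα₀ hα₁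
    rw [controlCost_sub_eq_zero huu']
    nlinarith
  · have hP := penalty_convex_combination_le hm hrc hrpos hε hu hu' hα₀.le hα₁.le
    have hC := controlCost_sub_pos hrc hrpos hu.1 hu'.1 huu'
    nlinarith [mul_pos (mul_pos hα₀ (sub_pos.2 hα₁)) hC]

/-- the functional `J` is strictly convex on `𝒫`: distinct elements of `𝒫`
(differing either as `L²` elements or in the `x₀` component) satisfy a strict convexity
inequality for every `α ∈ (0,1)`. -/
theorem J_strictly_convex
    (m : ℕ) (hm : 1 ≤ m)
    (r : ℝ → ℝ) (hrc : ContinuousOn r (Icc 0 1))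
    (hrpos : ∀ t ∈ Icc (0 : ℝ) 1, 0 < r t)
    (L0 : ℝ) (hL0 : 0 < L0)
    (f0 : ℝ → ℝ) (hf0 : ContDiff ℝ (2 * m) f0)
    (hN : volume (Nset m f0) = 0)
    (μ ε : ℝ) (hμ : 0 < μ) (hε : 0 < ε)
    (u u' : ℝ → ℝ) (x0 x0' : EuclideanSpace ℝ (Fin m))
    (hu : memP m f0 μ ε u x0) (hu' : memP m f0 μ ε u' x0')
    (hdist : ¬(u =ᵐ[volume.restrict (Icc (0 : ℝ) 1)] u' ∧ x0 = x0'))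
    (α : ℝ) (hα : α ∈ Ioo (0 : ℝ) 1) :
    Jfun m r f0 L0 (fun t => α * u t + (1 - α) * u' t) (α • x0 + (1 - α) • x0') <
      α * Jfun m r f0 L0 u x0 + (1 - α) * Jfun m r f0 L0 u' x0' :=
  J_strictly_convex_general m hm r hrc hrpos L0 hL0 f0 hN μ ε hε u u' x0 x0' hu hu' hdist α hα

end
end
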